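/- Let p be a subharmonic function on ℂ satisfying: p ≥ 0; log(1+|z|²) = O(p(z)); and there exist constants C, D > 0 such that |z − w| ≤ 1 implies p(z) ≤ C p(w) + D. Then an entire function f : ℂ → ℂ satisfies (∃ A, B > 0 such that |f(z)| ≤ A exp(B p(z)) for all z ∈ ℂ) if and only if (∃ C > 0 such that ∫_ℂ |f(z)|²/(1+|z|²)² e^{-C p(z)} dλ(z) < ∞). That is, A_p(ℂ) = 𝔥_p(ℂ) as sets. -/

import Mathlib

open MeasureTheory

/-- `p` is subharmonic on `Ω`: upper semicontinuous and satisfying the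
sub-mean-value inequality on every closed disc contained in `Ω`. -/
def SubharmonicOn (p : ℂ → ℝ) (Ω : Set ℂ) : Prop :=
  UpperSemicontinuousOn p Ω ∧
  ∀ z₀ : ℂ, ∀ r : ℝ, 0 < r → Metric.closedBall z₀ r ⊆ Ω →
    p z₀ ≤ (1 / (2 * Real.pi)) *
      ∫ θ in (0:ℝ)..(2 * Real.pi), p (z₀ + r * Complex.exp (θ * Complex.I))

/-!
If `‖f‖ ≤ A e^{B p}`, then `‖f‖² e^{-2Bp} ≤ A²`, and `(1 + |z|²)⁻²` is integrable on `ℂ`.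

Conversely, `‖f‖²` satisfies the sub-mean-value inequality on circles, so integrating in polar
coordinates gives `π ‖f c‖² ≤ ∫_{D(c,1)} ‖f‖²`. On `D(c,1)` the two growth conditions on `p` give
`(1 + |z|²)² e^{κ p z} ≤ e^{(2M + κ) p z} ≤ e^{(2M + κ)(C p c + D)}`, so the integral over the disc
is at most `e^{(2M + κ)(C p c + D)}` times the weighted norm of `f`. Hence
`‖f c‖² ≤ Q e^{2B p c}` with `B = (2M + κ) C / 2`, and `A = Q + 1` works since `Q ≤ (Q + 1)²`.
-/

open Metric Real Set

theorem norm_circleAverage_le {E : Type*} [NormedAddCommGroup E] [NormedSpace ℝ E]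
    (f : ℂ → E) (c : ℂ) (R : ℝ) :
    ‖circleAverage f c R‖ ≤ circleAverage (fun z ↦ ‖f z‖) c R := by
  rw [circleAverage_def, circleAverage_def, norm_smul, smul_eq_mul,
    Real.norm_of_nonneg (by positivity)]
  gcongr
  exact intervalIntegral.norm_integral_le_integral_norm (by positivity)

theorem DiffContOnCl.pow_norm_le_circleAverage {f : ℂ → ℂ} {c : ℂ} {R : ℝ}
    (hf : DiffContOnCl ℂ f (ball c |R|)) (n : ℕ) :
    ‖f c‖ ^ n ≤ Real.circleAverage (fun z ↦ ‖f z‖ ^ n) c R := by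
  have hfn : DiffContOnCl ℂ (fun z ↦ f z ^ n) (ball c |R|) :=
    (differentiable_pow n).comp_diffContOnCl hf
  simpa [hfn.circleAverage] using norm_circleAverage_le (fun z ↦ f z ^ n) c R

theorem integral_ball_eq_intervalIntegral_circleAverage {E : Type*} [NormedAddCommGroup E]
    [NormedSpace ℝ E] {g : ℂ → E} (hg : Continuous g) (c : ℂ) {r : ℝ} (hr : 0 ≤ r) :
    ∫ z in ball c r, g z = ∫ s in 0..r, (2 * π * s) • circleAverage g c s := by
  set F : ℝ × ℝ → E := fun q ↦ q.1 • g (circleMap c q.1 q.2)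
  have hpolar : ∀ q ∈ Complex.polarCoord.target,
      q.1 • (ball c r).indicator g (Complex.polarCoord.symm q + c)
        = (Iio r ×ˢ univ).indicator F q := by
    rintro ⟨s, θ⟩ ⟨hs, -⟩
    have hmem : Complex.polarCoord.symm (s, θ) + c ∈ ball c r ↔ s < r := by
      simp [abs_of_pos (show 0 < s from hs)]
    have hcircle : Complex.polarCoord.symm (s, θ) + c = circleMap c s θ := by
      simp only [Complex.polarCoord_symm_apply, Complex.ofReal_cos, Complex.ofReal_sin, circleMap,
        Complex.exp_mul_I]
      ring
    by_cases h : s < r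
    · rw [indicator_of_mem (hmem.2 h),
        indicator_of_mem (show (s, θ) ∈ Iio r ×ˢ univ from ⟨h, trivial⟩), hcircle]
    · rw [indicator_of_notMem (mt hmem.1 h), indicator_of_notMem (fun h' ↦ h h'.1), smul_zero]
  have hF : IntegrableOn F (Ioo 0 r ×ˢ Ioo (-π) π) := by
    refine (ContinuousOn.integrableOn_compact (isCompact_Icc.prod isCompact_Icc) ?_).mono_set
      (prod_mono Ioo_subset_Icc_self Ioo_subset_Icc_self)
    exact (by fun_prop : Continuous F).continuousOn
  have hinner : ∀ s, ∫ θ in Ioo (-π) π, F (s, θ) = (2 * π * s) • circleAverage g c s := by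
    intro s
    have hper : Function.Periodic (fun θ ↦ g (circleMap c s θ)) (2 * π) :=
      fun θ ↦ by simp only [periodic_circleMap c s θ]
    have hshift : ∫ θ in -π..π, g (circleMap c s θ) = ∫ θ in 0..2 * π, g (circleMap c s θ) := by
      simpa [show -π + 2 * π = π by ring] using hper.intervalIntegral_add_eq (-π) 0
    rw [← integral_Ioc_eq_integral_Ioo, ← intervalIntegral.integral_of_le (by linarith [pi_pos]),
      intervalIntegral.integral_smul, hshift, circleAverage_def, smul_smul]
    congr 1
    field_simp
  calc ∫ z in ball c r, g z
      = ∫ z, (ball c r).indicator g (z + c) := by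
        rw [integral_add_right_eq_self, integral_indicator measurableSet_ball]
    _ = ∫ q in Complex.polarCoord.target, (Iio r ×ˢ univ).indicator F q := by
        rw [← Complex.integral_comp_polarCoord_symm]
        exact setIntegral_congr_fun Complex.polarCoord.open_target.measurableSet hpolar
    _ = ∫ q in Ioo 0 r ×ˢ Ioo (-π) π, F q := by
        rw [setIntegral_indicator (measurableSet_Iio.prod MeasurableSet.univ),
          Complex.polarCoord_target, prod_inter_prod, Ioi_inter_Iio, inter_univ]
    _ = ∫ s in Ioo 0 r, ∫ θ in Ioo (-π) π, F (s, θ) := by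
        rw [Measure.volume_eq_prod] at hF ⊢
        exact setIntegral_prod F hF
    _ = ∫ s in 0..r, (2 * π * s) • circleAverage g c s := by
        simp_rw [hinner, intervalIntegral.integral_of_le hr, integral_Ioc_eq_integral_Ioo]

theorem Differentiable.pi_mul_sq_mul_pow_norm_le_setIntegral {f : ℂ → ℂ}
    (hf : Differentiable ℂ f) (c : ℂ) {r : ℝ} (hr : 0 ≤ r) (n : ℕ) :
    π * r ^ 2 * ‖f c‖ ^ n ≤ ∫ z in ball c r, ‖f z‖ ^ n := by
  have hcont : Continuous fun z ↦ ‖f z‖ ^ n := hf.continuous.norm.pow n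
  rw [integral_ball_eq_intervalIntegral_circleAverage hcont c hr]
  calc π * r ^ 2 * ‖f c‖ ^ n = ∫ s in 0..r, (2 * π * s) • ‖f c‖ ^ n := by
        rw [intervalIntegral.integral_smul_const, intervalIntegral.integral_const_mul, integral_id,
          smul_eq_mul]
        ring
    _ ≤ ∫ s in 0..r, (2 * π * s) • circleAverage (fun z ↦ ‖f z‖ ^ n) c s := by
        refine intervalIntegral.integral_mono_on hr ?_ ?_ fun s hs ↦ ?_
        · exact (by fun_prop : Continuous fun s : ℝ ↦ (2 * π * s) • ‖f c‖ ^ n).intervalIntegrable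
            0 r
        · exact (by fun_prop : Continuous fun s ↦
            (2 * π * s) • circleAverage (fun z ↦ ‖f z‖ ^ n) c s).intervalIntegrable 0 r
        · have hs0 : 0 ≤ 2 * π * s := by have := hs.1; positivity
          exact smul_le_smul_of_nonneg_left (hf.diffContOnCl.pow_norm_le_circleAverage n) hs0

theorem Differentiable.pi_mul_sq_mul_pow_norm_le_mul_integral {f : ℂ → ℂ}
    (hf : Differentiable ℂ f) {g : ℂ → ℝ} (hg : Integrable g) (hg0 : 0 ≤ g) {c : ℂ} {r K : ℝ}
    (hr : 0 ≤ r) (hK : 0 ≤ K) (n : ℕ) (hfg : ∀ z ∈ ball c r, ‖f z‖ ^ n ≤ K * g z) :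
    π * r ^ 2 * ‖f c‖ ^ n ≤ K * ∫ z, g z := by
  calc π * r ^ 2 * ‖f c‖ ^ n ≤ ∫ z in ball c r, ‖f z‖ ^ n :=
        hf.pi_mul_sq_mul_pow_norm_le_setIntegral c hr n
    _ ≤ ∫ z in ball c r, K * g z :=
        setIntegral_mono_on (((hf.continuous.norm.pow n).continuousOn.integrableOn_compact
            (isCompact_closedBall c r)).mono_set ball_subset_closedBall)
          (hg.const_mul K).integrableOn measurableSet_ball hfg
    _ ≤ K * ∫ z, g z := by
        rw [integral_const_mul]
        exact mul_le_mul_of_nonneg_left (setIntegral_le_integral hg (.of_forall hg0)) hK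

theorem integrable_inv_one_add_norm_sq_sq {E : Type*} [NormedAddCommGroup E]
    [NormedSpace ℝ E] [FiniteDimensional ℝ E] [MeasurableSpace E] [BorelSpace E]
    {μ : Measure E} [μ.IsAddHaarMeasure] (hE : Module.finrank ℝ E < 4) :
    Integrable (fun x : E ↦ ((1 + ‖x‖ ^ 2) ^ 2)⁻¹) μ := by
  have := integrable_rpow_neg_one_add_norm_sq (μ := μ) (r := 4) (by exact_mod_cast hE)
  refine this.congr (.of_forall fun x ↦ ?_)
  dsimp only
  rw [show (-4 : ℝ) / 2 = -(2 : ℕ) by norm_num, rpow_neg (by positivity), rpow_natCast]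

theorem one_add_sq_sq_le_exp {x M y : ℝ} (h : log (1 + x ^ 2) ≤ M * y) :
    (1 + x ^ 2) ^ 2 ≤ exp (2 * M * y) := by
  calc (1 + x ^ 2) ^ 2 = exp (log (1 + x ^ 2)) ^ 2 := by rw [exp_log (by positivity)]
    _ ≤ exp (M * y) ^ 2 := by gcongr
    _ = exp (2 * M * y) := by rw [← exp_nat_mul]; ring_nf

/-- `f ∈ A_p(ℂ)`. -/
def ExpBounded (p : ℂ → ℝ) (f : ℂ → ℂ) : Prop :=
  ∃ A > 0, ∃ B > 0, ∀ z : ℂ, ‖f z‖ ≤ A * exp (B * p z)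

/-- `f ∈ 𝔥_p(ℂ)`. -/
def WeightedSqIntegrable (p : ℂ → ℝ) (f : ℂ → ℂ) : Prop :=
  ∃ C > 0, Integrable (fun z : ℂ ↦ ‖f z‖ ^ 2 / (1 + ‖z‖ ^ 2) ^ 2 * exp (-(C * p z)))

theorem ExpBounded.weightedSqIntegrable {p : ℂ → ℝ} {f : ℂ → ℂ} (hp : Measurable p)
    (hf : Continuous f) (h : ExpBounded p f) : WeightedSqIntegrable p f := by
  obtain ⟨A, -, B, hB, hfA⟩ := h
  have hfm := hf.measurable
  refine ⟨2 * B, by positivity, ((integrable_inv_one_add_norm_sq_sq (by simp)).const_mul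
    (A ^ 2)).mono' (Measurable.aestronglyMeasurable (by fun_prop)) (.of_forall fun z ↦ ?_)⟩
  have hfz : ‖f z‖ ^ 2 * exp (-(2 * B * p z)) ≤ A ^ 2 := by
    calc ‖f z‖ ^ 2 * exp (-(2 * B * p z))
        ≤ (A * exp (B * p z)) ^ 2 * exp (-(2 * B * p z)) := by gcongr; exact hfA z
      _ = A ^ 2 := by
          rw [mul_pow, ← exp_nat_mul, mul_assoc, ← exp_add]
          ring_nf
          rw [exp_zero, mul_one]
  rw [Real.norm_of_nonneg (by positivity)]
  calc ‖f z‖ ^ 2 / (1 + ‖z‖ ^ 2) ^ 2 * exp (-(2 * B * p z))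
      = ‖f z‖ ^ 2 * exp (-(2 * B * p z)) * ((1 + ‖z‖ ^ 2) ^ 2)⁻¹ := by ring
    _ ≤ A ^ 2 * ((1 + ‖z‖ ^ 2) ^ 2)⁻¹ := by gcongr

theorem WeightedSqIntegrable.expBounded {p : ℂ → ℝ} {f : ℂ → ℂ} (hf : Differentiable ℂ f)
    {M C D : ℝ} (hM : 0 ≤ M) (hC : 0 < C) (hlog : ∀ z : ℂ, log (1 + ‖z‖ ^ 2) ≤ M * p z)
    (hloc : ∀ z w : ℂ, ‖z - w‖ ≤ 1 → p z ≤ C * p w + D) (h : WeightedSqIntegrable p f) :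
    ExpBounded p f := by
  obtain ⟨κ, hκ, hint⟩ := h
  set G : ℂ → ℝ := fun z ↦ ‖f z‖ ^ 2 / (1 + ‖z‖ ^ 2) ^ 2 * exp (-(κ * p z))
  have hG0 : 0 ≤ G := fun z ↦ by positivity
  set K := 2 * M + κ
  have hK : 0 < K := by positivity
  have hlocal : ∀ c, ∀ z ∈ ball c 1, ‖f z‖ ^ 2 ≤ exp (K * (C * p c + D)) * G z := by
    intro c z hz
    have hpz : p z ≤ C * p c + D := hloc z c (by simpa [dist_eq_norm] using (mem_ball.mp hz).le)
    calc ‖f z‖ ^ 2 = (1 + ‖z‖ ^ 2) ^ 2 * exp (κ * p z) * G z := by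
          simp only [G, exp_neg]; field_simp
      _ ≤ exp (2 * M * p z) * exp (κ * p z) * G z := by
          have := hG0 z
          gcongr
          exact one_add_sq_sq_le_exp (hlog z)
      _ = exp (K * p z) * G z := by rw [← exp_add, ← add_mul]
      _ ≤ exp (K * (C * p c + D)) * G z := by have := hG0 z; gcongr
  set Q := (∫ z, G z) * exp (K * D) / π
  have hQ : 0 ≤ Q := by have : 0 ≤ ∫ z, G z := integral_nonneg hG0; positivity
  refine ⟨Q + 1, by positivity, K * C / 2, by positivity, fun c ↦ ?_⟩
  have hmv := hf.pi_mul_sq_mul_pow_norm_le_mul_integral hint hG0 zero_le_one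
    (exp_nonneg _) 2 (hlocal c)
  have hsq : ‖f c‖ ^ 2 ≤ Q * exp (K * C * p c) := by
    rw [show exp (K * (C * p c + D)) = exp (K * D) * exp (K * C * p c) by
      rw [← exp_add]; ring_nf] at hmv
    rw [show Q * exp (K * C * p c) = (∫ z, G z) * exp (K * D) * exp (K * C * p c) / π by ring,
      le_div_iff₀ pi_pos]
    linarith
  refine (pow_le_pow_iff_left₀ (norm_nonneg _) (by positivity) two_ne_zero).mp ?_
  calc ‖f c‖ ^ 2 ≤ Q * exp (K * C * p c) := hsq
    _ ≤ (Q + 1) ^ 2 * exp (K * C * p c) := by gcongr; nlinarith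
    _ = ((Q + 1) * exp (K * C / 2 * p c)) ^ 2 := by rw [mul_pow, ← exp_nat_mul]; ring_nf

theorem stmt_6_general (p : ℂ → ℝ) (hsub : SubharmonicOn p Set.univ)
    (hlog : ∃ M > 0, ∀ z : ℂ, Real.log (1 + ‖z‖ ^ 2) ≤ M * p z)
    (hloc : ∃ C > 0, ∃ D > 0, ∀ z w : ℂ, ‖z - w‖ ≤ 1 → p z ≤ C * p w + D)
    (f : ℂ → ℂ) (hf : Differentiable ℂ f) :
    (∃ A > 0, ∃ B > 0, ∀ z : ℂ, ‖f z‖ ≤ A * Real.exp (B * p z)) ↔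
    (∃ C > 0,
      Integrable (fun z : ℂ => ‖f z‖ ^ 2 / (1 + ‖z‖ ^ 2) ^ 2 * Real.exp (-(C * p z)))) := by
  obtain ⟨M, hM, hlog⟩ := hlog
  obtain ⟨C, hC, D, -, hloc⟩ := hloc
  have hp : Measurable p := (upperSemicontinuousOn_univ_iff.mp hsub.1).measurable
  exact ⟨ExpBounded.weightedSqIntegrable hp hf.continuous,
    WeightedSqIntegrable.expBounded hf hM.le hC hlog hloc⟩

theorem stmt_6 (p : ℂ → ℝ) (hsub : SubharmonicOn p Set.univ)
    (hp0 : ∀ z : ℂ, 0 ≤ p z)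
    (hlog : ∃ M > 0, ∀ z : ℂ, Real.log (1 + ‖z‖ ^ 2) ≤ M * p z)
    (hloc : ∃ C > 0, ∃ D > 0, ∀ z w : ℂ, ‖z - w‖ ≤ 1 → p z ≤ C * p w + D)
    (f : ℂ → ℂ) (hf : Differentiable ℂ f) :
    (∃ A > 0, ∃ B > 0, ∀ z : ℂ, ‖f z‖ ≤ A * Real.exp (B * p z)) ↔
    (∃ C > 0,
      Integrable (fun z : ℂ => ‖f z‖ ^ 2 / (1 + ‖z‖ ^ 2) ^ 2 * Real.exp (-(C * p z)))) :=
  stmt_6_general p hsub hlog hloc f hf
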